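/- arXiv:2301.12208 — 7 statements merged into one kernel-verified Lean document; each statement's English description precedes it below -/
import Mathlib

section
/- Let H be a Hilbert space and T a bounded linear operator on H. If T commutes with a sequence (U_j) of unitary operators on H that converges weakly to 0, then the spectrum of T equals its essential spectrum. -/
open Filter Topology
open scoped InnerProductSpace

/-- An operator is Fredholm iff it is invertible modulo compact operators (Atkinson). -/
def IsFredholm {H : Type*} [NormedAddCommGroup H] [NormedSpace ℂ H]
    (T : H →L[ℂ] H) : Prop :=
  ∃ S : H →L[ℂ] H, IsCompactOperator ⇑(S ∘L T - 1) ∧ IsCompactOperator ⇑(T ∘L S - 1)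

/-!
Let `A = T - λ` be Fredholm, with `S A = 1 + K` and `A S = 1 + K'` for compact `K, K'`. Since `A`
commutes with the `U_j`, both `ker A` and `(range A)ᗮ` are invariant under them; on `ker A` we
have `‖x‖ = ‖K x‖`, and on `(range A)ᗮ` we have `‖x‖ ≤ ‖K' x‖`. Applied to `U_j x`, which has norm
`‖x‖` and tends weakly to `0`, this forces `x = 0`, because compact operators send bounded weakly
null sequences to norm null ones. So `A` is injective with dense range; injective and invertible
modulo compacts, it is also bounded below, hence invertible.
-/

theorem IsCompactOperator.tendsto_apply_zero_of_weakly_null {𝕜 H : Type*} [RCLike 𝕜]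
    [NormedAddCommGroup H] [InnerProductSpace 𝕜 H] [CompleteSpace H] {K : H →L[𝕜] H}
    (hK : IsCompactOperator K) {u : ℕ → H} {R : ℝ} (hR : ∀ j, ‖u j‖ ≤ R)
    (hu : ∀ y, Tendsto (fun j => ⟪u j, y⟫_𝕜) atTop (𝓝 0)) :
    Tendsto (fun j => K (u j)) atTop (𝓝 0) := by
  obtain ⟨s, hs, hKs⟩ := hK.image_closedBall_subset_compact R
  refine tendsto_of_subseq_tendsto fun ψ hψ => ?_
  obtain ⟨w, -, φ, hφ, hw⟩ := hs.tendsto_subseq (x := fun k => K (u (ψ k)))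
    fun k => hKs ⟨u (ψ k), by simpa using hR (ψ k), rfl⟩
  refine ⟨φ, ?_⟩
  suffices w = 0 by rwa [this] at hw
  have h_inner : Tendsto (fun k => ⟪K (u (ψ (φ k))), w⟫_𝕜) atTop (𝓝 ⟪w, w⟫_𝕜) :=
    hw.inner tendsto_const_nhds
  have h_weak : Tendsto (fun k => ⟪K (u (ψ (φ k))), w⟫_𝕜) atTop (𝓝 0) := by
    simp_rw [← ContinuousLinearMap.adjoint_inner_right]
    exact (hu _).comp (hψ.comp hφ.tendsto_atTop)
  exact inner_self_eq_zero.mp (tendsto_nhds_unique h_inner h_weak)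

theorem ContinuousLinearMap.exists_antilipschitzWith_of_injective {𝕜 E F : Type*} [RCLike 𝕜]
    [NormedAddCommGroup E] [NormedSpace 𝕜 E] [NormedAddCommGroup F] [NormedSpace 𝕜 F]
    {A : E →L[𝕜] F} {S : F →L[𝕜] E} (hK : IsCompactOperator ⇑(S ∘L A - 1))
    (hA : Function.Injective A) : ∃ C, AntilipschitzWith C A := by
  rw [antilipschitzWith_iff_exists_mul_le_norm]
  by_contra! h
  have h_unit : ∀ n : ℕ, ∃ u : E, ‖u‖ = 1 ∧ ‖A u‖ < 1 / (n + 1) := by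
    intro n
    obtain ⟨x, hx⟩ := h (1 / (n + 1)) (by positivity)
    have hx0 : x ≠ 0 := by rintro rfl; simp at hx
    refine ⟨(‖x‖⁻¹ : 𝕜) • x, norm_smul_inv_norm hx0, ?_⟩
    rw [map_smul, norm_smul, norm_inv, RCLike.norm_ofReal, abs_norm, inv_mul_lt_iff₀
      (norm_pos_iff.mpr hx0)]
    linarith
  choose u hu_norm hAu_norm using h_unit
  have hAu : Tendsto (fun n => A (u n)) atTop (𝓝 0) :=
    squeeze_zero_norm (fun n => (hAu_norm n).le) tendsto_one_div_add_atTop_nhds_zero_nat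
  obtain ⟨s, hs, hKs⟩ := hK.image_closedBall_subset_compact 1
  obtain ⟨w, -, φ, hφ, hw⟩ := hs.tendsto_subseq (x := fun n => (S ∘L A - 1) (u n))
    fun n => hKs ⟨u n, by simp [hu_norm], rfl⟩
  -- `u = S (A u) - K u` with `A u → 0` and `K u → w` along `φ`
  have hu_lim : Tendsto (fun k => u (φ k)) atTop (𝓝 (-w)) := by
    have h_lim := ((S.continuous.tendsto' 0 0 (map_zero S)).comp
      (hAu.comp hφ.tendsto_atTop)).sub hw
    simpa using h_lim
  have hw_norm : ‖-w‖ = 1 :=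
    tendsto_nhds_unique hu_lim.norm (by simp [hu_norm])
  have hAw : A (-w) = 0 :=
    tendsto_nhds_unique ((A.continuous.tendsto _).comp hu_lim) (hAu.comp hφ.tendsto_atTop)
  rw [hA (hAw.trans (map_zero A).symm), norm_zero] at hw_norm
  exact zero_ne_one hw_norm

section CommutingUnitaries

variable {𝕜 H : Type*} [RCLike 𝕜] [NormedAddCommGroup H] [InnerProductSpace 𝕜 H]
  [CompleteSpace H] {U : ℕ → H ≃ₗᵢ[𝕜] H}

theorem eq_zero_of_forall_norm_le_norm_apply
    (hweak : ∀ x y : H, Tendsto (fun j => ⟪U j x, y⟫_𝕜) atTop (𝓝 0))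
    {K : H →L[𝕜] H} (hK : IsCompactOperator K) {x : H} (hx : ∀ j, ‖x‖ ≤ ‖K (U j x)‖) :
    x = 0 := by
  have h_lim := (hK.tendsto_apply_zero_of_weakly_null (fun j => ((U j).norm_map x).le)
    (hweak x)).norm
  rw [norm_zero] at h_lim
  exact norm_le_zero_iff.mp (ge_of_tendsto' h_lim hx)

variable {A S : H →L[𝕜] H}

theorem injective_of_commute_of_isCompactOperator_comp_sub_one
    (hcomm : ∀ j x, A (U j x) = U j (A x))
    (hweak : ∀ x y : H, Tendsto (fun j => ⟪U j x, y⟫_𝕜) atTop (𝓝 0))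
    (hK : IsCompactOperator ⇑(S ∘L A - 1)) : Function.Injective A := by
  rw [injective_iff_map_eq_zero]
  intro x hx
  refine eq_zero_of_forall_norm_le_norm_apply hweak hK fun j => ?_
  have hAUx : A (U j x) = 0 := by rw [hcomm, hx, map_zero]
  simp [hAUx]

theorem orthogonal_range_eq_bot_of_commute_of_isCompactOperator_comp_sub_one
    (hcomm : ∀ j x, A (U j x) = U j (A x))
    (hweak : ∀ x y : H, Tendsto (fun j => ⟪U j x, y⟫_𝕜) atTop (𝓝 0))
    (hK : IsCompactOperator ⇑(A ∘L S - 1)) : A.rangeᗮ = ⊥ := by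
  rw [Submodule.eq_bot_iff]
  intro y hy
  have h_inv : ∀ j, U j y ∈ A.rangeᗮ := by
    rintro j _ ⟨z, rfl⟩
    have hz : A z = U j (A ((U j).symm z)) := by
      rw [← hcomm, LinearIsometryEquiv.apply_symm_apply]
    rw [ContinuousLinearMap.coe_coe, hz, LinearIsometryEquiv.inner_map_map]
    exact hy _ ⟨_, rfl⟩
  refine eq_zero_of_forall_norm_le_norm_apply hweak hK fun j => ?_
  set w := U j y
  -- `w ⊥ A (S w) = w + K' w`, so `‖w‖² = -⟪K' w, w⟫` with `K' = A S - 1`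
  have h_orth : ⟪A (S w), w⟫_𝕜 = 0 := h_inv j _ ⟨S w, rfl⟩
  have h_sq : ‖w‖ ^ 2 ≤ ‖(A ∘L S - 1) w‖ * ‖w‖ := by
    have h_eq : ⟪(A ∘L S - 1) w, w⟫_𝕜 = -⟪w, w⟫_𝕜 := by
      simp [inner_sub_left, h_orth]
    calc ‖w‖ ^ 2 = ‖⟪(A ∘L S - 1) w, w⟫_𝕜‖ := by rw [h_eq, norm_neg, inner_self_eq_norm_sq_to_K,
            norm_pow, RCLike.norm_ofReal, abs_norm]
      _ ≤ ‖(A ∘L S - 1) w‖ * ‖w‖ := norm_inner_le_norm _ _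
  rw [← (U j).norm_map y]
  nlinarith [norm_nonneg w, norm_nonneg ((A ∘L S - 1) w)]

end CommutingUnitaries

theorem IsUnit.isFredholm {H : Type*} [NormedAddCommGroup H] [NormedSpace ℂ H]
    {A : H →L[ℂ] H} (hA : IsUnit A) : IsFredholm A := by
  obtain ⟨v, rfl⟩ := hA
  refine ⟨↑v⁻¹, ?_, ?_⟩
  · rw [← ContinuousLinearMap.mul_def, Units.inv_mul, sub_self]
    exact isCompactOperator_zero
  · rw [← ContinuousLinearMap.mul_def, Units.mul_inv, sub_self]
    exact isCompactOperator_zero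

theorem IsFredholm.isUnit_of_commute {H : Type*} [NormedAddCommGroup H] [InnerProductSpace ℂ H]
    [CompleteSpace H] {A : H →L[ℂ] H} (hA : IsFredholm A) {U : ℕ → H ≃ₗᵢ[ℂ] H}
    (hcomm : ∀ j x, A (U j x) = U j (A x))
    (hweak : ∀ x y : H, Tendsto (fun j => ⟪U j x, y⟫_ℂ) atTop (𝓝 0)) : IsUnit A := by
  obtain ⟨S, hK, hK'⟩ := hA
  rw [ContinuousLinearMap.isUnit_iff_bijective, A.bijective_iff_dense_range_and_antilipschitz,
    Submodule.topologicalClosure_eq_top_iff]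
  exact ⟨orthogonal_range_eq_bot_of_commute_of_isCompactOperator_comp_sub_one hcomm hweak hK',
    A.exists_antilipschitzWith_of_injective hK
      (injective_of_commute_of_isCompactOperator_comp_sub_one hcomm hweak hK)⟩

/-- if `T` commutes with a sequence of unitaries converging weakly to `0`,
then the spectrum of `T` equals its essential spectrum. -/
theorem stmt_1 {H : Type*} [NormedAddCommGroup H] [InnerProductSpace ℂ H] [CompleteSpace H]
    (T : H →L[ℂ] H) (U : ℕ → (H ≃ₗᵢ[ℂ] H))
    (hcomm : ∀ (j : ℕ) (x : H), T (U j x) = U j (T x))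
    (hweak : ∀ x y : H, Tendsto (fun j => (inner ℂ (U j x) y : ℂ)) atTop (𝓝 0)) :
    spectrum ℂ T = {l : ℂ | ¬ IsFredholm (T - l • (1 : H →L[ℂ] H))} := by
  ext l
  have hcomm_sub : ∀ j x, (T - l • 1) (U j x) = U j ((T - l • 1) x) := by
    intro j x
    simp [hcomm]
  rw [spectrum.mem_iff, Algebra.algebraMap_eq_smul_one, ← IsUnit.neg_iff, neg_sub,
    Set.mem_ofPred_eq, not_iff_not]
  exact ⟨IsUnit.isFredholm, fun hF => hF.isUnit_of_commute hcomm_sub hweak⟩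
end

section
/- Let Y be a Banach space, S ∈ L(Y) with spectrum not containing a nonzero λ, and T ∈ L(Y) compact. If ‖(T - S)T‖ < |λ| · ‖(S - λI)⁻¹‖⁻¹, then T - λI is invertible. -/
/-! With `R = (S - λ)⁻¹` and `E = (T - S) T`, the ring identity `(R T - 1)(T - λ) = λ + R E`
exhibits `R T - 1` as a left inverse of `T - λ` up to the perturbation `R E`, whose norm is
`< |λ|` by hypothesis; hence `T - λ` is injective. By the Fredholm alternative for the compact
operator `T`, an injective `T - λ` with `λ ≠ 0` is invertible. -/

theorem mul_sub_one_mul_sub_sub_of_mul_sub_eq_one {A : Type*} [Ring A] {R S T c : A}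
    (hc : Commute T c) (hRS : R * (S - c) = 1) :
    (R * T - 1) * (T - c) - c = R * ((T - S) * T) := by
  have hRc : R * c = R * S - 1 := by rw [← hRS, mul_sub, sub_sub_cancel]
  calc (R * T - 1) * (T - c) - c = R * T * T - R * (T * c) - T := by noncomm_ring
    _ = R * T * T - R * c * T - T := by rw [hc.eq, ← mul_assoc]
    _ = R * ((T - S) * T) := by rw [hRc]; noncomm_ring

section

variable {𝕜 X : Type*} [NontriviallyNormedField 𝕜] [NormedAddCommGroup X] [NormedSpace 𝕜 X]

theorem ContinuousLinearMap.injective_of_norm_mul_sub_smul_one_lt {B A : X →L[𝕜] X} {μ : 𝕜}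
    (h : ‖B * A - μ • 1‖ < ‖μ‖) : Function.Injective A := by
  refine (injective_iff_map_eq_zero A).2 fun x hx ↦ norm_le_zero_iff.1 ?_
  have hBA : (B * A - μ • 1) x = -(μ • x) := by simp [hx]
  have : ‖μ‖ * ‖x‖ ≤ ‖B * A - μ • 1‖ * ‖x‖ := by
    simpa [hBA, norm_smul] using (B * A - μ • 1).le_opNorm x
  exact le_of_not_gt fun hx0 ↦ h.not_ge (le_of_mul_le_mul_right this hx0)

theorem IsCompactOperator.isUnit_sub_smul_one_of_injective [CompleteSpace X] {T : X →L[𝕜] X}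
    {μ : 𝕜} (hT : IsCompactOperator ⇑T) (hμ : μ ≠ 0)
    (hinj : Function.Injective ⇑(T - μ • 1)) :
    IsUnit (T - μ • 1) := by
  rcases hT.hasEigenvalue_or_mem_resolventSet hμ with ⟨hev⟩ | hres
  · obtain ⟨x, hx, hx0⟩ := Submodule.ne_bot_iff _ |>.1 hev
    refine absurd (hinj ?_) hx0
    have hTx : T x = μ • x := Module.End.mem_eigenspace_iff.1 hx
    simp [hTx]
  · simpa [Algebra.algebraMap_eq_smul_one] using (spectrum.mem_resolventSet_iff.1 hres).neg

end

theorem stmt_2_general {Y : Type*} [NormedAddCommGroup Y] [NormedSpace ℂ Y] [CompleteSpace Y]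
    (S T : Y →L[ℂ] Y) (hT : IsCompactOperator ⇑T) (l : ℂ)
    (h : ‖(T - S) ∘L T‖ < ‖l‖ * ‖Ring.inverse (S - l • (1 : Y →L[ℂ] Y))‖⁻¹) :
    IsUnit (T - l • (1 : Y →L[ℂ] Y)) := by
  set R := Ring.inverse (S - l • (1 : Y →L[ℂ] Y))
  -- `Ring.inverse` of a non-unit is `0`, so `h` forces both `l ≠ 0` and `S - l • 1` invertible.
  have hpos : 0 < ‖l‖ * ‖R‖⁻¹ := (norm_nonneg _).trans_lt h
  have hl0 : l ≠ 0 := by rintro rfl; simp at hpos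
  have hR : ‖R‖ ≠ 0 := by intro h0; simp [h0] at hpos
  have hS : IsUnit (S - l • (1 : Y →L[ℂ] Y)) := by
    by_contra hS
    exact hR (by simp [R, Ring.inverse_non_unit _ hS])
  have hdefect : ‖R * ((T - S) * T)‖ < ‖l‖ :=
    calc ‖R * ((T - S) * T)‖ ≤ ‖R‖ * ‖(T - S) ∘L T‖ := norm_mul_le _ _
      _ < ‖R‖ * (‖l‖ * ‖R‖⁻¹) := mul_lt_mul_of_pos_left h (by positivity)
      _ = ‖l‖ := by field_simp
  refine hT.isUnit_sub_smul_one_of_injective hl0 ?_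
  refine ContinuousLinearMap.injective_of_norm_mul_sub_smul_one_lt (B := R * T - 1) (μ := l) ?_
  rwa [mul_sub_one_mul_sub_sub_of_mul_sub_eq_one ((Commute.one_right T).smul_right l)
    (Ring.inverse_mul_cancel _ hS)]

/-- Hackbusch, Theorem 4.7.7: if `λ ∉ σ(S) ∪ {0}`, `T` is compact and
`‖(T - S)T‖ < |λ| ‖(S - λI)⁻¹‖⁻¹`, then `T - λI` is invertible. -/
theorem stmt_2 {Y : Type*} [NormedAddCommGroup Y] [NormedSpace ℂ Y] [CompleteSpace Y]
    (S T : Y →L[ℂ] Y) (hT : IsCompactOperator ⇑T) (l : ℂ)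
    (hl0 : l ≠ 0) (hl : l ∉ spectrum ℂ S)
    (h : ‖(T - S) ∘L T‖ < ‖l‖ * ‖Ring.inverse (S - l • (1 : Y →L[ℂ] Y))‖⁻¹) :
    IsUnit (T - l • (1 : Y →L[ℂ] Y)) :=
  stmt_2_general S T hT l h
end

section
/- Let Y be a Banach space, T ∈ L(Y) compact, and (T_N) a collectively compact sequence in L(Y) converging strongly to T. Then ‖(T - T_N)T‖ → 0 as N → ∞. -/
open Filter Topology Metric Set

/-!
The operators `T_N` map the unit ball into one bounded set, so they are uniformly bounded and
hence equicontinuous; by Ascoli, strong convergence `T_N → T` is therefore uniform on the compact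
set `K ⊇ T(B₁)`. Since `(T - T_N)T` maps the unit ball into `(T - T_N)(K)`, its norm is at most
`sup_{y ∈ K} ‖T y - T_N y‖ → 0`.
-/

theorem EquicontinuousOn.tendstoUniformlyOn_of_tendsto {ι X α : Type*} [TopologicalSpace X]
    [UniformSpace α] {F : ι → X → α} {f : X → α} {K : Set X} {l : Filter ι}
    (hF : EquicontinuousOn F K) (hK : IsCompact K) (h : ∀ x ∈ K, Tendsto (F · x) l (𝓝 (f x))) :
    TendstoUniformlyOn F f l K := by
  have hunif := (EquicontinuousOn.tendsto_uniformOnFun_iff_pi' (𝔖 := {K}) (by simpa)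
    (by simpa) l f).mpr <| by
    rw [sUnion_singleton, tendsto_pi_nhds]
    exact fun x => h x x.2
  exact UniformOnFun.tendsto_iff_tendstoUniformlyOn.mp hunif K rfl

namespace ContinuousLinearMap

variable {𝕜 𝕜₂ E F : Type*} [NontriviallyNormedField 𝕜] [NontriviallyNormedField 𝕜₂]
  {σ₁₂ : 𝕜 →+* 𝕜₂} [RingHomIsometric σ₁₂] [SeminormedAddCommGroup E]
  [SeminormedAddCommGroup F] [NormedSpace 𝕜 E] [NormedSpace 𝕜₂ F] {ι : Type*}

theorem opNorm_le_of_norm_le_one [NormedAlgebra ℝ 𝕜] {f : E →SL[σ₁₂] F} {C : ℝ}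
    (hf : ∀ x, ‖x‖ ≤ 1 → ‖f x‖ ≤ C) : ‖f‖ ≤ C :=
  have hC : 0 ≤ C := by simpa using hf 0 (by simp)
  opNorm_le_of_unit_norm hC fun x hx => hf x hx.le

theorem tendstoUniformlyOn_of_tendsto_of_norm_le {A : ι → E →SL[σ₁₂] F} {B : E →SL[σ₁₂] F}
    {l : Filter ι} {K : Set E} {C : ℝ} (hA : ∀ i, ‖A i‖ ≤ C)
    (h : ∀ x, Tendsto (A · x) l (𝓝 (B x))) (hK : IsCompact K) :
    TendstoUniformlyOn (fun i => ⇑(A i)) B l K :=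
  have hequi : Equicontinuous ((↑) ∘ A) :=
    ((NormedSpace.equicontinuous_TFAE A).out 5 1).mp (⟨C, hA⟩ : ∃ C, ∀ i, ‖A i‖ ≤ C)
  hequi.equicontinuousOn K |>.tendstoUniformlyOn_of_tendsto hK fun x _ => h x

theorem exists_forall_opNorm_le_of_isBounded [NormedAlgebra ℝ 𝕜] {A : ι → E →SL[σ₁₂] F}
    (hA : Bornology.IsBounded {y | ∃ i x, ‖x‖ ≤ 1 ∧ A i x = y}) : ∃ C, ∀ i, ‖A i‖ ≤ C := by
  obtain ⟨C, hC⟩ := hA.exists_norm_le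
  exact ⟨C, fun i => opNorm_le_of_norm_le_one fun x hx => hC _ ⟨i, x, hx, rfl⟩⟩

theorem tendsto_norm_sub_comp_of_tendstoUniformlyOn [NormedAlgebra ℝ 𝕜] {G : Type*}
    [SeminormedAddCommGroup G] [NormedSpace 𝕜 G] {A : ι → E →SL[σ₁₂] F} {B : E →SL[σ₁₂] F}
    {l : Filter ι} {K : Set E} (T : G →L[𝕜] E) (hTK : T '' closedBall 0 1 ⊆ K)
    (h : TendstoUniformlyOn (fun i => ⇑(A i)) B l K) :
    Tendsto (fun i => ‖(B - A i) ∘SL T‖) l (𝓝 0) := by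
  refine Metric.tendsto_nhds.mpr fun ε hε => ?_
  filter_upwards [Metric.tendstoUniformlyOn_iff.mp h (ε / 2) (half_pos hε)] with i hi
  rw [dist_zero_right, norm_norm]
  refine (opNorm_le_of_norm_le_one fun x hx => ?_).trans_lt (half_lt_self hε)
  rw [comp_apply, sub_apply, ← dist_eq_norm]
  exact (hi _ (hTK ⟨x, mem_closedBall_zero_iff.mpr hx, rfl⟩)).le

end ContinuousLinearMap

theorem stmt_8_general {Y : Type*} [NormedAddCommGroup Y] [NormedSpace ℂ Y]
    (T : Y →L[ℂ] Y) (TN : ℕ → (Y →L[ℂ] Y)) (hT : IsCompactOperator ⇑T)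
    (hcc : IsCompact (closure {y : Y | ∃ (N : ℕ) (φ : Y), ‖φ‖ ≤ 1 ∧ TN N φ = y}))
    (hstrong : ∀ φ : Y, Tendsto (fun N => TN N φ) atTop (𝓝 (T φ))) :
    Tendsto (fun N => ‖(T - TN N) ∘L T‖) atTop (𝓝 0) := by
  obtain ⟨K, hK, hTK⟩ := hT.image_closedBall_subset_compact (f := (T : Y →ₗ[ℂ] Y)) 1
  obtain ⟨C, hC⟩ := ContinuousLinearMap.exists_forall_opNorm_le_of_isBounded
    (hcc.isBounded.subset subset_closure)
  exact ContinuousLinearMap.tendsto_norm_sub_comp_of_tendstoUniformlyOn T hTK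
    (ContinuousLinearMap.tendstoUniformlyOn_of_tendsto_of_norm_le hC hstrong hK)

/-- if `T` is compact and `(T_N)` is collectively compact and converges
strongly to `T`, then `‖(T - T_N)T‖ → 0`. -/
theorem stmt_8 {Y : Type*} [NormedAddCommGroup Y] [NormedSpace ℂ Y] [CompleteSpace Y]
    (T : Y →L[ℂ] Y) (TN : ℕ → (Y →L[ℂ] Y)) (hT : IsCompactOperator ⇑T)
    (hcc : IsCompact (closure {y : Y | ∃ (N : ℕ) (φ : Y), ‖φ‖ ≤ 1 ∧ TN N φ = y}))
    (hstrong : ∀ φ : Y, Tendsto (fun N => TN N φ) atTop (𝓝 (T φ))) :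
    Tendsto (fun N => ‖(T - TN N) ∘L T‖) atTop (𝓝 0) :=
  stmt_8_general T TN hT hcc hstrong
end

section
/- Let ψ : ℝ → ℂ be a 1-periodic function that extends to a bounded analytic function on the strip Σ_c = {z : |Im z| < c} for some c > 0. Then for every N ∈ ℕ the midpoint-rule error satisfies |∫₀¹ ψ(x) dx - (1/N) Σ_{q=1}^N ψ((q - 1/2)/N)| ≤ 2 ‖ψ‖_c / (e^{2πNc} - 1), where ‖ψ‖_c = sup_{z ∈ Σ_c} |ψ(z)|. -/
open Complex MeasureTheory Set intervalIntegral
open scoped Interval Real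

/-!
Averaging the `N` translates `z ↦ ψ ((q + z) / N)`, `0 ≤ q < N`, turns the `N`-node midpoint rule
for `ψ` into the one-node rule `φ ↦ φ (1 / 2)` for a function `φ` with the same integral over
`[0, 1]` that is `1`-periodic, analytic and bounded by `M` on the wider strip `|Im z| < N c`.

For the one-node rule, moving the contour of `aₙ = ∫₀¹ φ(x) e^{-2πinx} dx` to `Im z = ∓c` (the
vertical sides cancel by periodicity) gives `‖aₙ‖ ≤ M e^{-2π|n|c}`. The coefficients are then
summable, so the Fourier series converges to `φ (1 / 2) = ∑ (-1)ⁿ aₙ`, and the error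
`-∑_{n ≠ 0} (-1)ⁿ aₙ` is at most `2M ∑_{k ≥ 1} e^{-2πkc} = 2M / (e^{2πc} - 1)`.
-/

theorem hasSum_fourier_series_of_periodic {f : ℝ → ℂ} (hf : Continuous f)
    (hper : Function.Periodic f 1)
    (hsum : Summable fun n : ℤ => ∫ t : ℝ in (0:ℝ)..1, f t * cexp (-2 * π * I * n * t)) (x : ℝ) :
    HasSum (fun n : ℤ => (∫ t : ℝ in (0:ℝ)..1, f t * cexp (-2 * π * I * n * t)) *
      cexp (2 * π * I * n * x)) (f x) := by
  have : Fact ((0:ℝ) < 1) := ⟨one_pos⟩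
  let F : C(AddCircle (1:ℝ), ℂ) := ⟨hper.lift, continuous_coinduced_dom.2 hf⟩
  have hcoeff : ∀ n : ℤ,
      fourierCoeff F n = ∫ t : ℝ in (0:ℝ)..1, f t * cexp (-2 * π * I * n * t) := fun n => by
    rw [fourierCoeff_eq_intervalIntegral F n 0, zero_add, div_one, one_smul]
    refine integral_congr fun t _ => ?_
    rw [fourier_coe_apply, smul_eq_mul, ofReal_one, div_one, mul_comm]
    congr 2
    push_cast
    ring
  have h := has_pointwise_sum_fourier_series_of_summable (f := F) (by rwa [funext hcoeff])
    (x : AddCircle (1:ℝ))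
  simp only [hcoeff, fourier_coe_apply, smul_eq_mul, ofReal_one, div_one] at h
  exact h

section Strip

variable {φ : ℂ → ℂ} {c M : ℝ}

theorem integral_add_mul_I_eq_of_periodic (hφ : DifferentiableOn ℂ φ {z : ℂ | |z.im| < c})
    (hper : ∀ z : ℂ, |z.im| < c → φ (z + 1) = φ z) {y : ℝ} (hy : |y| < c) :
    ∫ x : ℝ in (0:ℝ)..1, φ (x + y * I) = ∫ x : ℝ in (0:ℝ)..1, φ x := by
  have hsegment : ∀ t ∈ [[(0:ℝ), y]], |t| < c := fun t ht => by
    simpa using (abs_sub_left_of_mem_uIcc ht).trans_lt (by simpa using hy)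
  have hrect := integral_boundary_rect_eq_zero_of_differentiableOn φ 0 (1 + y * I) <|
    hφ.mono fun z ⟨_, hz⟩ => hsegment z.im (by simpa using hz)
  have hsides : ∫ t : ℝ in (0:ℝ)..y, φ (1 + t * I) = ∫ t : ℝ in (0:ℝ)..y, φ (t * I) :=
    integral_congr fun t ht => by
      simpa [add_comm] using hper (t * I) (by simpa using hsegment t ht)
  simp only [zero_re, zero_im, add_re, one_re, mul_re, I_re, I_im, ofReal_re, ofReal_im, add_im,
    one_im, mul_im, mul_zero, mul_one, sub_zero, add_zero, zero_add, ofReal_zero, ofReal_one,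
    zero_mul, hsides] at hrect
  linear_combination -hrect

theorem norm_integral_mul_exp_le (hc : 0 < c) (hφ : DifferentiableOn ℂ φ {z : ℂ | |z.im| < c})
    (hper : ∀ z : ℂ, |z.im| < c → φ (z + 1) = φ z) (hM : ∀ z : ℂ, |z.im| < c → ‖φ z‖ ≤ M)
    (n : ℤ) :
    ‖∫ x : ℝ in (0:ℝ)..1, φ x * cexp (-2 * π * I * n * x)‖
      ≤ M * Real.exp (-(2 * π * c)) ^ n.natAbs := by
  set g : ℂ → ℂ := fun z => φ z * cexp (-2 * π * I * n * z)
  have hg : DifferentiableOn ℂ g {z : ℂ | |z.im| < c} := hφ.mul (by fun_prop)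
  have hgper : ∀ z : ℂ, |z.im| < c → g (z + 1) = g z := fun z hz => by
    simp only [g]
    rw [show -2 * π * I * n * (z + 1) = -2 * π * I * n * z + (-n : ℤ) * (2 * π * I) by
      push_cast; ring]
    simp only [hper z hz, exp_add, exp_int_mul_two_pi_mul_I, mul_one]
  have hshifted : ∀ y ∈ Ioo (-c) c, ‖∫ x : ℝ in (0:ℝ)..1, g x‖ ≤ M * Real.exp (2 * π * n * y) := by
    intro y hy
    have hy' : |y| < c := abs_lt.2 hy
    rw [← integral_add_mul_I_eq_of_periodic hg hgper hy']
    refine (intervalIntegral.norm_integral_le_of_norm_le_const (C := M * Real.exp (2 * π * n * y))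
      fun x _ => ?_).trans_eq (by simp)
    rw [norm_mul, norm_exp, show (-2 * π * I * n * (x + y * I)).re = 2 * π * n * y by simp]
    exact mul_le_mul_of_nonneg_right (hM _ (by simpa using hy')) (Real.exp_pos _).le
  have hclosure : Icc (-c) c ⊆ {y | ‖∫ x : ℝ in (0:ℝ)..1, g x‖ ≤ M * Real.exp (2 * π * n * y)} := by
    rw [← closure_Ioo (by linarith)]
    exact (isClosed_le continuous_const (by fun_prop)).closure_subset_iff.2 hshifted
  obtain ⟨y₀, hy₀, hny₀⟩ : ∃ y₀ ∈ Icc (-c) c, (n : ℝ) * y₀ = -(|(n : ℝ)| * c) := by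
    rcases le_total 0 (n : ℝ) with hn | hn
    · exact ⟨-c, ⟨le_rfl, by linarith⟩, by rw [abs_of_nonneg hn]; ring⟩
    · exact ⟨c, ⟨by linarith, le_rfl⟩, by rw [abs_of_nonpos hn]; ring⟩
  calc ‖∫ x : ℝ in (0:ℝ)..1, g x‖ ≤ M * Real.exp (2 * π * n * y₀) := hclosure hy₀
    _ = M * Real.exp (-(2 * π * c)) ^ n.natAbs := by
      rw [← Real.exp_nat_mul, Nat.cast_natAbs, mul_assoc _ (n : ℝ), hny₀]
      push_cast
      ring_nf

theorem continuous_comp_ofReal_of_differentiableOn (hc : 0 < c)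
    (hφ : DifferentiableOn ℂ φ {z : ℂ | |z.im| < c}) : Continuous fun x : ℝ => φ x :=
  hφ.continuousOn.comp_continuous continuous_ofReal fun x => by simpa using hc

theorem norm_integral_sub_midpoint_le (hc : 0 < c)
    (hφ : DifferentiableOn ℂ φ {z : ℂ | |z.im| < c})
    (hper : ∀ z : ℂ, |z.im| < c → φ (z + 1) = φ z) (hM : ∀ z : ℂ, |z.im| < c → ‖φ z‖ ≤ M) :
    ‖(∫ x : ℝ in (0:ℝ)..1, φ x) - φ (1 / 2)‖ ≤ 2 * M / (Real.exp (2 * π * c) - 1) := by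
  set r := Real.exp (-(2 * π * c))
  have hr0 : 0 ≤ r := (Real.exp_pos _).le
  have hr1 : r < 1 := Real.exp_lt_one_iff.2 (neg_lt_zero.2 (by positivity))
  have hgeom : HasSum (fun k : ℕ => 2 * M * r ^ (k + 1)) (2 * M * r / (1 - r)) := by
    rw [div_eq_mul_inv]
    simpa only [pow_succ', mul_assoc] using
      (hasSum_geometric_of_lt_one hr0 hr1).mul_left (2 * M * r)
  set a : ℤ → ℂ := fun n => ∫ t : ℝ in (0:ℝ)..1, φ t * cexp (-2 * π * I * n * t)
  have ha : ∀ n, ‖a n‖ ≤ M * r ^ n.natAbs := norm_integral_mul_exp_le hc hφ hper hM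
  have hsum : Summable a := by
    refine Summable.of_norm_bounded (g := fun n : ℤ => M * r ^ n.natAbs) ?_ ha
    have := (summable_geometric_of_lt_one hr0 hr1).mul_left M
    exact .of_nat_of_neg (by simpa using this) (by simpa using this)
  set b : ℤ → ℂ := fun n => a n * cexp (2 * π * I * n * (1 / 2 : ℝ))
  have hseries : HasSum b (φ (1 / 2 : ℝ)) := hasSum_fourier_series_of_periodic (f := fun x => φ x)
    (continuous_comp_ofReal_of_differentiableOn hc hφ)
    (fun x => by simpa using hper x (by simpa using hc)) hsum (1 / 2)
  have hb : ∀ n, ‖b n‖ ≤ M * r ^ n.natAbs := fun n => by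
    rw [norm_mul, show 2 * π * I * n * (1 / 2 : ℝ) = (π * n : ℝ) * I by push_cast; ring,
      norm_exp_ofReal_mul_I, mul_one]
    exact ha n
  have hb0 : b 0 = ∫ x : ℝ in (0:ℝ)..1, φ x := by simp [b, a]
  have htail := (hasSum_nat_add_iff' 1).2 hseries.nat_add_neg
  calc ‖(∫ x : ℝ in (0:ℝ)..1, φ x) - φ (1 / 2)‖
      = ‖φ (1 / 2 : ℝ) + b 0 - ∑ i ∈ Finset.range 1, (b i + b (-i))‖ := by
        rw [Finset.sum_range_one, Nat.cast_zero, neg_zero, hb0, ← norm_neg]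
        congr 1
        push_cast
        ring
    _ ≤ 2 * M * r / (1 - r) := htail.norm_le_of_bounded hgeom fun k => by
        have hpos := hb (k + 1 : ℕ)
        have hneg := hb (-(k + 1 : ℕ))
        rw [Int.natAbs_neg, Int.natAbs_natCast] at hneg
        rw [Int.natAbs_natCast] at hpos
        linarith [norm_add_le (b (k + 1 : ℕ)) (b (-(k + 1 : ℕ)))]
    _ = 2 * M / (Real.exp (2 * π * c) - 1) := by
        simp only [r, Real.exp_neg]
        field_simp

end Strip

noncomputable def rescaledAverage (ψ : ℂ → ℂ) (N : ℕ) (z : ℂ) : ℂ :=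
  (1 / N) * ∑ q ∈ Finset.range N, ψ ((q + z) / N)

section RescaledAverage

variable {ψ : ℂ → ℂ} {N : ℕ} {c : ℝ}

theorem abs_im_natCast_add_div_lt (hN : 0 < N) (q : ℕ) {z : ℂ} (hz : |z.im| < N * c) :
    |(((q : ℂ) + z) / N).im| < c := by
  have hN' : (0 : ℝ) < N := Nat.cast_pos.2 hN
  rwa [div_natCast_im, add_im, natCast_im, zero_add, abs_div, Nat.abs_cast, div_lt_iff₀ hN',
    mul_comm]

theorem differentiableOn_rescaledAverage (hN : 0 < N)
    (hψ : DifferentiableOn ℂ ψ {z : ℂ | |z.im| < c}) :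
    DifferentiableOn ℂ (rescaledAverage ψ N) {z : ℂ | |z.im| < N * c} := by
  have hterm : ∀ q ∈ Finset.range N,
      DifferentiableOn ℂ (fun z : ℂ => ψ ((q + z) / N)) {z : ℂ | |z.im| < N * c} := fun q _ =>
    hψ.comp (((differentiable_const _).add differentiable_id).div_const _).differentiableOn
      fun _ hz => abs_im_natCast_add_div_lt hN q hz
  exact (DifferentiableOn.fun_sum hterm).const_mul _

theorem rescaledAverage_add_one (hN : 0 < N) (hper : ∀ z : ℂ, |z.im| < c → ψ (z + 1) = ψ z)
    {z : ℂ} (hz : |z.im| < N * c) : rescaledAverage ψ N (z + 1) = rescaledAverage ψ N z := by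
  have hlast : ψ ((N + z) / N) = ψ ((0 + z) / N) := by
    have h := hper _ (abs_im_natCast_add_div_lt hN 0 hz)
    rw [Nat.cast_zero] at h
    rw [← h]
    congr 1
    field_simp [Nat.cast_ne_zero.2 hN.ne']
    ring
  have hshift := Finset.sum_range_succ' (fun q : ℕ => ψ ((q + z) / N)) N
  rw [Finset.sum_range_succ] at hshift
  simp only [rescaledAverage, ← add_assoc, add_right_comm _ z 1]
  push_cast at hshift
  rw [hlast] at hshift
  linear_combination (1 / (N : ℂ)) * hshift.symm

theorem norm_rescaledAverage_le (hN : 0 < N) {M : ℝ} (hM : ∀ z : ℂ, |z.im| < c → ‖ψ z‖ ≤ M)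
    {z : ℂ} (hz : |z.im| < N * c) : ‖rescaledAverage ψ N z‖ ≤ M := by
  calc ‖rescaledAverage ψ N z‖ ≤ (1 / N) * ∑ q ∈ Finset.range N, ‖ψ ((q + z) / N)‖ := by
        rw [rescaledAverage, norm_mul, norm_div, norm_one, norm_natCast]
        gcongr
        exact norm_sum_le _ _
    _ ≤ (1 / N) * ∑ q ∈ Finset.range N, M := by
        gcongr with q
        exact hM _ (abs_im_natCast_add_div_lt hN q hz)
    _ = M := by
        rw [Finset.sum_const, Finset.card_range, nsmul_eq_mul]
        field_simp

theorem integral_rescaledAverage (hN : 0 < N) (hψ : Continuous fun x : ℝ => ψ x) :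
    ∫ x : ℝ in (0:ℝ)..1, rescaledAverage ψ N x = ∫ x : ℝ in (0:ℝ)..1, ψ x := by
  have hN' : (N : ℝ) ≠ 0 := Nat.cast_ne_zero.2 hN.ne'
  have hNc : (N : ℂ) ≠ 0 := Nat.cast_ne_zero.2 hN.ne'
  have hpiece : ∀ q : ℕ, ∫ x : ℝ in (0:ℝ)..1, ψ ((q + x) / N)
      = N * ∫ x : ℝ in (q / N : ℝ)..((q + 1 : ℕ) / N : ℝ), ψ x := by
    intro q
    have := integral_comp_add_div (f := fun x : ℝ => ψ x) (a := 0) (b := 1) hN' (q / N)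
    rw [real_smul, ofReal_natCast, zero_div, add_zero] at this
    push_cast at this ⊢
    convert this using 3 <;> rw [add_div]
  have hadjacent := sum_integral_adjacent_intervals (f := fun x : ℝ => ψ x) (μ := volume)
    (a := fun k : ℕ => (k / N : ℝ)) (n := N) fun k _ => hψ.intervalIntegrable _ _
  simp only [rescaledAverage]
  rw [intervalIntegral.integral_const_mul, intervalIntegral.integral_finsetSum fun q _ => ?_]
  · simp only [hpiece, ← Finset.mul_sum, hadjacent, Nat.cast_zero, zero_div, div_self hN']
    field_simp
  · have hcont := hψ.comp ((continuous_const (y := (q : ℝ))).add continuous_id |>.div_const (N : ℝ))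
    refine (hcont.congr fun x => ?_).intervalIntegrable _ _
    simp

end RescaledAverage

/-- midpoint rule for 1-periodic analytic functions, Kress Thm 9.28:
exponentially small quadrature error in terms of the bound on the strip `Σ_c`. -/
theorem stmt_9 (ψ : ℂ → ℂ) (c : ℝ) (hc : 0 < c)
    (hanal : DifferentiableOn ℂ ψ {z : ℂ | |z.im| < c})
    (hper : ∀ z : ℂ, |z.im| < c → ψ (z + 1) = ψ z)
    (M : ℝ) (hM : ∀ z : ℂ, |z.im| < c → ‖ψ z‖ ≤ M)
    (N : ℕ) (hN : 0 < N) :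
    ‖(∫ x in (0:ℝ)..1, ψ x) -
        (1 / N) * ∑ q : Fin N, ψ ((((q : ℕ) : ℂ) + 1 / 2) / (N : ℂ))‖
      ≤ 2 * M / (Real.exp (2 * Real.pi * N * c) - 1) := by
  have h := norm_integral_sub_midpoint_le (by positivity : 0 < (N : ℝ) * c)
    (differentiableOn_rescaledAverage hN hanal) (fun _ hz => rescaledAverage_add_one hN hper hz)
    (fun _ hz => norm_rescaledAverage_le hN hM hz)
  rw [integral_rescaledAverage hN (continuous_comp_ofReal_of_differentiableOn hc hanal),
    rescaledAverage, ← mul_assoc] at h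
  rwa [Fin.sum_univ_eq_sum_range (fun q => ψ ((q + 1 / 2) / N))]
end

section
/- Let f : [0,∞) → ℝ satisfy f(0) = 0, f real analytic on (0,∞), and f(αx) = α f(x) for all x > 0 for some α ∈ (0,1), with g(x) = α^{-x} f(α^x) such that g and g' are bounded on ℝ. Then f is Lipschitz continuous on [0,∞), with Lipschitz constant at most ‖g‖_∞ + ‖g'‖_∞ / |log α|. -/
/-!
Inverting `g x = α⁻ˣ f(αˣ)` gives `f y = y · g(log_α y)` for `y > 0`, so
`f' y = g(log_α y) + g'(log_α y) / log α`, which is bounded by `‖g‖_∞ + ‖g'‖_∞ / |log α|`;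
the mean value theorem makes `f` Lipschitz on `(0, ∞)` with that constant. Since also
`|f y| ≤ ‖g‖_∞ · y`, `f` is continuous at `0`, and the bound passes to the closure `[0, ∞)`.
-/

open Real Set Filter Topology

section

variable {f g : ℝ → ℝ} {α : ℝ}

lemma eq_mul_comp_logb (hα0 : 0 < α) (hα1 : α ≠ 1) (hg : ∀ x, g x = α ^ (-x) * f (α ^ x))
    {y : ℝ} (hy : 0 < y) : f y = y * g (logb α y) := by
  rw [hg, rpow_neg hα0.le, rpow_logb hα0 hα1 hy]
  field_simp

lemma differentiable_of_eq_rpow_neg_mul (hα0 : 0 < α) (hf : DifferentiableOn ℝ f (Ioi 0))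
    (hg : ∀ x, g x = α ^ (-x) * f (α ^ x)) : Differentiable ℝ g := by
  have hpow : Differentiable ℝ (fun x : ℝ => α ^ x) := fun x =>
    (hasStrictDerivAt_const_rpow hα0 x).hasDerivAt.differentiableAt
  rw [funext hg]
  intro x
  exact (hpow.comp differentiable_neg x).mul
    ((hf.differentiableAt (Ioi_mem_nhds (rpow_pos_of_pos hα0 x))).comp x (hpow x))

lemma hasDerivAt_mul_comp_logb {b y : ℝ} (hy : y ≠ 0) (hg : DifferentiableAt ℝ g (logb b y)) :
    HasDerivAt (fun y => y * g (logb b y)) (g (logb b y) + deriv g (logb b y) / log b) y := by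
  have hlogb : HasDerivAt (logb b) (y⁻¹ / log b) y := (hasDerivAt_log hy).div_const _
  refine ((hasDerivAt_id' y).mul (hg.hasDerivAt.comp y hlogb)).congr_deriv ?_
  rw [Function.comp_apply]
  field_simp

lemma continuousWithinAt_Ici_zero_of_abs_le_mul {C : ℝ} (h0 : f 0 = 0)
    (h : ∀ y > 0, |f y| ≤ C * y) : ContinuousWithinAt f (Ici 0) 0 := by
  have hbound : ∀ y ∈ Ici (0 : ℝ), ‖f y‖ ≤ C * |y| := by
    intro y hy
    rcases (mem_Ici.1 hy).eq_or_lt with hy | hy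
    · simp [← hy, h0]
    · simpa [abs_of_pos hy] using h y hy
  rw [ContinuousWithinAt, h0]
  refine squeeze_zero_norm' (eventually_nhdsWithin_of_forall hbound) ?_
  simpa using ((continuous_const.mul continuous_abs).tendsto' 0 0 (by simp)).mono_left
    nhdsWithin_le_nhds (f := fun y : ℝ => C * |y|)

end

theorem stmt_11_general (f g : ℝ → ℝ) (α : ℝ) (hα : α ∈ Set.Ioo (0:ℝ) 1)
    (hf0 : f 0 = 0)
    (hfa : AnalyticOnNhd ℝ f (Set.Ioi 0))
    (hg : ∀ x : ℝ, g x = α ^ (-x) * f (α ^ x))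
    (Cg Cg' : ℝ) (hCg : ∀ x, |g x| ≤ Cg) (hCg' : ∀ x, |deriv g x| ≤ Cg') :
    LipschitzOnWith (Real.toNNReal (Cg + Cg' / |Real.log α|)) f (Set.Ici 0) := by
  obtain ⟨hα0, hα1⟩ := hα
  have hf_eq : ∀ y > 0, f y = y * g (logb α y) := fun y hy => eq_mul_comp_logb hα0 hα1.ne hg hy
  have hg_diff := differentiable_of_eq_rpow_neg_mul hα0 hfa.differentiableOn hg
  have hf' : ∀ y ∈ Ioi (0 : ℝ),
      HasDerivAt f (g (logb α y) + deriv g (logb α y) / log α) y := fun y hy =>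
    (hasDerivAt_mul_comp_logb hy.ne' (hg_diff _)).congr_of_eventuallyEq
      (eventually_of_mem (Ioi_mem_nhds hy) hf_eq)
  have hf'_le : ∀ y, |g (logb α y) + deriv g (logb α y) / log α| ≤ Cg + Cg' / |log α| :=
    fun y => calc
      _ ≤ |g (logb α y)| + |deriv g (logb α y)| / |log α| := by
        rw [← abs_div]; exact abs_add_le _ _
      _ ≤ Cg + Cg' / |log α| := by gcongr; exacts [hCg _, hCg' _]
  have hlip : LipschitzOnWith (Cg + Cg' / |log α|).toNNReal f (Ioi 0) :=
    (convex_Ioi 0).lipschitzOnWith_of_nnnorm_hasDerivWithin_le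
      (fun y hy => (hf' y hy).hasDerivWithinAt)
      (fun y _ => by rw [← norm_toNNReal]; exact Real.toNNReal_le_toNNReal (hf'_le y))
  have hcont : ContinuousOn f (Ici 0) := by
    intro y hy
    rcases (mem_Ici.1 hy).eq_or_lt with hy | hy
    · subst hy
      refine continuousWithinAt_Ici_zero_of_abs_le_mul (C := Cg) hf0 fun y hy => ?_
      rw [hf_eq y hy, abs_mul, abs_of_pos hy, mul_comm]
      exact mul_le_mul_of_nonneg_right (hCg _) hy.le
    · exact (hfa y hy).continuousAt.continuousWithinAt
  rw [← closure_Ioi] at hcont ⊢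
  exact hlip.closure hcont

/-- a dilation-invariant real-analytic `f` with `f 0 = 0`, whose associated
periodic function `g` and its derivative are bounded, is Lipschitz on `[0,∞)` with Lipschitz
constant at most `‖g‖_∞ + ‖g'‖_∞/|log α|`. -/
theorem stmt_11 (f g : ℝ → ℝ) (α : ℝ) (hα : α ∈ Set.Ioo (0:ℝ) 1)
    (hf0 : f 0 = 0)
    (hfa : AnalyticOnNhd ℝ f (Set.Ioi 0))
    (hdil : ∀ x > (0:ℝ), f (α * x) = α * f x)
    (hg : ∀ x : ℝ, g x = α ^ (-x) * f (α ^ x))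
    (Cg Cg' : ℝ) (hCg : ∀ x, |g x| ≤ Cg) (hCg' : ∀ x, |deriv g x| ≤ Cg') :
    LipschitzOnWith (Real.toNNReal (Cg + Cg' / |Real.log α|)) f (Set.Ici 0) :=
  stmt_11_general f g α hα hf0 hfa hg Cg Cg' hCg hCg'
end

section
/- For 0 < α < 1 and integer n ≥ 2, the tail of the series Σ_{j≥2} α^{j/2}/(α - α^j) satisfies Σ_{j=n+1}^∞ α^{j/2}/(α - α^j) ≤ log(tanh((n-1)|log α|/4)) / (α^{1/2} log α). -/
/-!
With `L = -log α > 0` the summand is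
`F x = α ^ (x / 2) / (α - α ^ x) = 1 / (2 √α sinh (L (x - 1) / 2))`, positive and decreasing
for `x > 1`, and `tailBound α x = log (tanh ((x - 1) L / 4)) / (√α log α)` is a nonnegative
primitive of `-F`. Hence `F (x + 1) ≤ ∫_x^{x+1} F = tailBound α x - tailBound α (x + 1)`, and
the tail sum telescopes to at most `tailBound α n`.
-/

open Real Set

namespace Real

lemma tanh_pos {x : ℝ} (hx : 0 < x) : 0 < tanh x := by
  rw [tanh_eq_sinh_div_cosh]
  exact div_pos (sinh_pos_iff.mpr hx) (cosh_pos x)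

lemma hasDerivAt_log_tanh {x : ℝ} (hx : 0 < x) :
    HasDerivAt (fun y => log (tanh y)) (2 / sinh (2 * x)) x := by
  have htanh : HasDerivAt (fun y => sinh y / cosh y)
      ((cosh x * cosh x - sinh x * sinh x) / cosh x ^ 2) x :=
    (hasDerivAt_sinh x).div (hasDerivAt_cosh x) (cosh_pos x).ne'
  simp only [← tanh_eq_sinh_div_cosh] at htanh
  convert htanh.log (tanh_pos hx).ne' using 1
  have hs : sinh x ≠ 0 := (sinh_pos_iff.mpr hx).ne'
  have hc : cosh x ≠ 0 := (cosh_pos x).ne'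
  rw [tanh_eq_sinh_div_cosh, sinh_two_mul]
  field_simp
  linear_combination -cosh_sq_sub_sinh_sq x

lemma two_mul_sub_div_sinh_le_log_tanh_sub {u v : ℝ} (hu : 0 < u) (huv : u ≤ v) :
    2 * (v - u) / sinh (2 * v) ≤ log (tanh v) - log (tanh u) := by
  have hderiv : ∀ x ∈ Icc u v, HasDerivAt (fun y => log (tanh y)) (2 / sinh (2 * x)) x :=
    fun x hx => hasDerivAt_log_tanh (hu.trans_le hx.1)
  rw [mul_div_right_comm]
  refine (convex_Icc u v).mul_sub_le_image_sub_of_le_deriv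
    (fun x hx => (hderiv x hx).continuousAt.continuousWithinAt)
    (fun x hx => (hderiv x (interior_subset hx)).differentiableAt.differentiableWithinAt)
    (fun x hx => ?_) u (left_mem_Icc.mpr huv) v (right_mem_Icc.mpr huv) huv
  rw [interior_Icc] at hx
  rw [(hderiv x (Ioo_subset_Icc_self hx)).deriv]
  exact div_le_div_of_nonneg_left zero_le_two (sinh_pos_iff.mpr (by linarith [hx.1]))
    (sinh_le_sinh.mpr (by linarith [hx.2]))

lemma rpow_half_div_sub_rpow {α : ℝ} (hα : 0 < α) (x : ℝ) :
    α ^ (x / 2) / (α - α ^ x) = (2 * α ^ (1 / 2 : ℝ) * sinh (log α * (1 - x) / 2))⁻¹ := by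
  have hfactor :
      α - α ^ x = α ^ (x / 2) * (2 * α ^ (1 / 2 : ℝ) * sinh (log α * (1 - x) / 2)) := by
    obtain ⟨a, rfl⟩ : ∃ a, α = exp a := ⟨log α, (exp_log hα).symm⟩
    simp only [rpow_def_of_pos (exp_pos a), log_exp, sinh_eq]
    have e1 : exp (a * (x / 2)) * exp (a * (1 / 2)) * exp (a * (1 - x) / 2) = exp a := by
      rw [← exp_add, ← exp_add]; ring_nf
    have e2 :
        exp (a * (x / 2)) * exp (a * (1 / 2)) * exp (-(a * (1 - x) / 2)) = exp (a * x) := by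
      rw [← exp_add, ← exp_add]; ring_nf
    linear_combination e2 - e1
  rw [hfactor, div_mul_cancel_left₀ (rpow_pos_of_pos hα _).ne']

end Real

noncomputable def tailBound (α x : ℝ) : ℝ :=
  log (tanh ((x - 1) * |log α| / 4)) / (α ^ (1 / 2 : ℝ) * log α)

lemma tailBound_nonneg {α : ℝ} (hα : α ∈ Ioo 0 1) {x : ℝ} (hx : 1 < x) :
    0 ≤ tailBound α x := by
  have hlog : log α < 0 := log_neg hα.1 hα.2
  have harg : 0 < (x - 1) * |log α| / 4 := by
    have hL : 0 < |log α| := abs_pos.mpr hlog.ne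
    have hx1 : 0 < x - 1 := sub_pos.mpr hx
    positivity
  exact div_nonneg_of_nonpos (log_nonpos (tanh_pos harg).le (tanh_lt_one _).le)
    (mul_neg_of_pos_of_neg (rpow_pos_of_pos hα.1 _) hlog).le

lemma rpow_half_div_sub_rpow_le_tailBound_sub {α : ℝ} (hα : α ∈ Ioo 0 1) {x : ℝ}
    (hx : 1 < x) :
    α ^ ((x + 1) / 2) / (α - α ^ (x + 1)) ≤ tailBound α x - tailBound α (x + 1) := by
  obtain ⟨L, hL, hlog⟩ : ∃ L, 0 < L ∧ log α = -L :=
    ⟨-log α, neg_pos.mpr (log_neg hα.1 hα.2), (neg_neg _).symm⟩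
  have habs : |log α| = L := by rw [hlog, abs_neg, abs_of_pos hL]
  have hs : 0 < α ^ (1 / 2 : ℝ) := rpow_pos_of_pos hα.1 _
  have hx1 : 0 < x - 1 := sub_pos.mpr hx
  have hx0 : 0 < x := by linarith
  have hgap := two_mul_sub_div_sinh_le_log_tanh_sub (u := (x - 1) * L / 4) (v := x * L / 4)
    (by positivity) (by linarith)
  have hsinh : 0 < sinh (2 * (x * L / 4)) := sinh_pos_iff.mpr (by positivity)
  rw [rpow_half_div_sub_rpow hα.1, tailBound, tailBound, add_sub_cancel_right, habs, hlog,
    show -L * (1 - (x + 1)) / 2 = 2 * (x * L / 4) by ring]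
  calc (2 * α ^ (1 / 2 : ℝ) * sinh (2 * (x * L / 4)))⁻¹
      = 2 * (x * L / 4 - (x - 1) * L / 4) / sinh (2 * (x * L / 4))
          / (α ^ (1 / 2 : ℝ) * L) := by field_simp; ring
    _ ≤ (log (tanh (x * L / 4)) - log (tanh ((x - 1) * L / 4)))
          / (α ^ (1 / 2 : ℝ) * L) := by gcongr
    _ = _ := by field_simp; ring

lemma tsum_le_of_le_sub_succ {f G : ℕ → ℝ} (hf : ∀ j, 0 ≤ f j)
    (hfG : ∀ j, f j ≤ G j - G (j + 1)) (hG : ∀ j, 0 ≤ G j) : ∑' j, f j ≤ G 0 := by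
  refine Real.tsum_le_of_sum_range_le hf fun N => ?_
  calc ∑ j ∈ Finset.range N, f j
      ≤ ∑ j ∈ Finset.range N, (G j - G (j + 1)) := Finset.sum_le_sum fun j _ => hfG j
    _ = G 0 - G N := Finset.sum_range_sub' G N
    _ ≤ G 0 := sub_le_self _ (hG N)

/-- Remark 3.9, tail bound: for `0 < α < 1` and `n ≥ 2`,
`Σ_{j=n+1}^∞ α^{j/2}/(α - α^j) ≤ log(tanh((n-1)|log α|/4)) / (α^{1/2} log α)`. -/
theorem stmt_12 (α : ℝ) (hα : α ∈ Set.Ioo (0:ℝ) 1) (n : ℕ) (hn : 2 ≤ n) :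
    (∑' j : ℕ, α ^ (((n + 1 + j : ℕ) : ℝ) / 2) / (α - α ^ (n + 1 + j)))
      ≤ Real.log (Real.tanh (((n : ℝ) - 1) * |Real.log α| / 4)) /
          (α ^ ((1 : ℝ) / 2) * Real.log α) := by
  have hcast (j : ℕ) : ((n + 1 + j : ℕ) : ℝ) = ((n + j : ℕ) : ℝ) + 1 := by push_cast; ring
  have hgt (j : ℕ) : 1 < ((n + j : ℕ) : ℝ) := by exact_mod_cast (by omega : 1 < n + j)
  refine tsum_le_of_le_sub_succ (G := fun j => tailBound α ((n + j : ℕ) : ℝ))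
    (fun j => div_nonneg (rpow_nonneg hα.1.le _)
      (sub_nonneg.mpr (pow_le_of_le_one hα.1.le hα.2.le (by omega))))
    (fun j => ?_) (fun j => tailBound_nonneg hα (hgt j))
  rw [← rpow_natCast, hcast, ← add_assoc, Nat.cast_add_one]
  exact rpow_half_div_sub_rpow_le_tailBound_sub hα (hgt j)
end

section
/- Let Y be a Banach space, Ŝ ∈ L(Y), ρ₀ > 0 with spectral radius ρ(Ŝ) < ρ₀. Define μ₁ = ρ₀ and recursively ν_ℓ = ‖(Ŝ - μ_ℓ I)⁻¹‖⁻¹, μ_{ℓ+1} = μ_ℓ e^{i ν_ℓ/(2ρ₀)}. Let n* be the smallest integer with Σ_{ℓ=1}^{n*} ν_ℓ ≥ 4πρ₀. Then for every λ with |λ| = ρ₀ there exists μ ∈ {μ₁,…,μ_{n*+1}} such that ‖(Ŝ - λI)⁻¹‖⁻¹ ≥ ‖(Ŝ - μI)⁻¹‖⁻¹ - |λ - μ| ≥ min_{ℓ=1,…,n*} (ν_ℓ/4 + ν_{ℓ+1}/2). -/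
/-!
Write `μ_ℓ = ρ₀ e^{iθ_ℓ}` with `θ₁ = 0` and `θ_{ℓ+1} - θ_ℓ = ν_ℓ / (2ρ₀)`. Since
`θ_{n*+1} ≥ 2π`, the argument of `λ` lies in some arc `[θ_ℓ, θ_{ℓ+1}]`, and as chords are
shorter than arcs, `|λ - μ_ℓ| + |λ - μ_{ℓ+1}| ≤ ν_ℓ / 2`. The resolvent identity makes the lower
norm `‖(Ŝ - zI)⁻¹‖⁻¹` 1-Lipschitz in `z`, which is the second inequality for every `μ_ℓ`; and if
`ν_ℓ - |λ - μ_ℓ|` fell below `ν_ℓ/4 + ν_{ℓ+1}/2`, then `ν_{ℓ+1} - |λ - μ_{ℓ+1}|` would exceed it.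
-/

open Complex Finset

theorem NormedRing.inv_norm_inverse_sub_norm_sub_le {R : Type*} [NormedRing R] {a b : R}
    (ha : IsUnit a) (hb : IsUnit b) :
    ‖Ring.inverse a‖⁻¹ - ‖a - b‖ ≤ ‖Ring.inverse b‖⁻¹ := by
  nontriviality R
  have hpos : ∀ {c : R}, IsUnit c → 0 < ‖Ring.inverse c‖ := fun hc =>
    norm_pos_iff.mpr hc.ringInverse.ne_zero
  have hp := hpos ha
  have hq := hpos hb
  have hres : Ring.inverse b = Ring.inverse a + Ring.inverse a * (a - b) * Ring.inverse b := by
    rw [mul_sub, sub_mul, Ring.inverse_mul_cancel a ha, mul_assoc, Ring.mul_inverse_cancel b hb,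
      one_mul, mul_one, add_sub_cancel]
  have hkey : ‖Ring.inverse b‖ ≤ ‖Ring.inverse a‖ + ‖Ring.inverse a‖ * ‖a - b‖ * ‖Ring.inverse b‖ :=
    calc ‖Ring.inverse b‖ = ‖Ring.inverse a + Ring.inverse a * (a - b) * Ring.inverse b‖ :=
          congrArg norm hres
      _ ≤ ‖Ring.inverse a‖ + ‖Ring.inverse a * (a - b) * Ring.inverse b‖ := norm_add_le _ _
      _ ≤ _ := by grw [norm_mul_le, norm_mul_le]
  rw [← sub_nonneg]
  have hgap : ‖Ring.inverse b‖⁻¹ - (‖Ring.inverse a‖⁻¹ - ‖a - b‖) =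
      (‖Ring.inverse a‖ + ‖Ring.inverse a‖ * ‖a - b‖ * ‖Ring.inverse b‖ - ‖Ring.inverse b‖) /
        (‖Ring.inverse a‖ * ‖Ring.inverse b‖) := by
    field_simp
    ring
  rw [hgap]
  exact div_nonneg (sub_nonneg.mpr hkey) (by positivity)

theorem ContinuousLinearMap.inv_norm_inverse_sub_smul_one_sub_norm_sub_le {𝕜 E : Type*}
    [NontriviallyNormedField 𝕜] [NormedAddCommGroup E] [NormedSpace 𝕜 E] {T : E →L[𝕜] E}
    {z w : 𝕜} (hz : IsUnit (T - z • 1)) (hw : IsUnit (T - w • 1)) :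
    ‖Ring.inverse (T - z • 1)‖⁻¹ - ‖w - z‖ ≤ ‖Ring.inverse (T - w • 1)‖⁻¹ := by
  refine le_trans (sub_le_sub_left ?_ _) (NormedRing.inv_norm_inverse_sub_norm_sub_le hz hw)
  rw [sub_sub_sub_cancel_left, ← sub_smul]
  exact (norm_smul_le _ _).trans (mul_le_of_le_one_right (norm_nonneg _) norm_id_le)

theorem isUnit_sub_smul_one_of_spectralRadius_lt {𝕜 A : Type*} [NormedField 𝕜] [Ring A]
    [Algebra 𝕜 A] {a : A} {z : 𝕜} (h : spectralRadius 𝕜 a < ‖z‖₊) : IsUnit (a - z • 1) := by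
  simpa [Algebra.algebraMap_eq_smul_one] using
    (spectrum.mem_resolventSet_of_spectralRadius_lt h : IsUnit _).neg

theorem Complex.exists_mem_Ico_eq_norm_mul_exp (z : ℂ) :
    ∃ φ ∈ Set.Ico 0 (2 * Real.pi), z = ‖z‖ * exp (φ * I) := by
  refine ⟨toIcoMod Real.two_pi_pos 0 z.arg, toIcoMod_mem_Ico' _ _, ?_⟩
  conv_lhs => rw [← norm_mul_exp_arg_mul_I z]
  congr 1
  rw [exp_eq_exp_iff_exists_int]
  refine ⟨toIcoDiv Real.two_pi_pos 0 z.arg, ?_⟩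
  rw [← sub_eq_iff_eq_add', ← sub_mul, ← ofReal_sub, self_sub_toIcoMod_eq_mul]
  push_cast
  ring

theorem Complex.norm_mul_exp_sub_mul_exp_le {r : ℝ} (hr : 0 ≤ r) (α β : ℝ) :
    ‖r * exp (α * I) - r * exp (β * I)‖ ≤ r * |α - β| := by
  have : (r : ℂ) * exp (α * I) - r * exp (β * I) = r * exp (β * I) * (exp (I * ↑(α - β)) - 1) := by
    rw [mul_sub, mul_one, mul_assoc, ← exp_add]
    push_cast
    ring_nf
  rw [this, norm_mul, norm_mul, norm_real, Real.norm_of_nonneg hr, norm_exp_ofReal_mul_I, mul_one]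
  exact mul_le_mul_of_nonneg_left Real.norm_exp_I_mul_ofReal_sub_one_le hr

theorem Complex.eq_mul_exp_sum_Ico_of_succ {μ a : ℕ → ℂ} {m : ℕ}
    (h : ∀ l, m ≤ l → μ (l + 1) = μ l * exp (a l)) :
    ∀ l, m ≤ l → μ l = μ m * exp (∑ j ∈ Ico m l, a j) := by
  refine Nat.le_induction (by simp) fun l hl ih => ?_
  rw [h l hl, ih, sum_Ico_succ_top hl, exp_add, mul_assoc]

theorem Nat.exists_mem_Ico_le_le_succ {α : Type*} [LinearOrder α] (θ : ℕ → α) (x : α) {m n : ℕ}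
    (hmn : m < n) (hm : θ m ≤ x) (hn : x ≤ θ n) :
    ∃ l ∈ Ico m n, θ l ≤ x ∧ x ≤ θ (l + 1) := by
  induction n, hmn using Nat.le_induction with
  | base => exact ⟨m, by simp, hm, hn⟩
  | succ n hmn ih =>
    by_cases hθn : θ n ≤ x
    · exact ⟨n, mem_Ico.mpr ⟨by omega, by omega⟩, hθn, hn⟩
    · obtain ⟨l, hl, h⟩ := ih (not_le.mp hθn).le
      exact ⟨l, Ico_subset_Ico_right n.le_succ hl, h⟩

theorem le_sub_or_le_sub_of_add_le_half {a b d d' : ℝ} (h : d + d' ≤ a / 2) :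
    a / 4 + b / 2 ≤ a - d ∨ a / 4 + b / 2 ≤ b - d' := by
  by_contra! h'
  linarith

theorem Complex.exists_mem_Icc_norm_sub_add_norm_sub_le {ρ : ℝ} (hρ : 0 ≤ ρ) {θ : ℕ → ℝ} {n : ℕ}
    (hn : 1 ≤ n) (hθ1 : θ 1 = 0) (hθn : 2 * Real.pi ≤ θ (n + 1)) {z : ℂ} (hz : ‖z‖ = ρ) :
    ∃ l ∈ Icc 1 n, ‖z - ρ * exp (θ l * I)‖ + ‖z - ρ * exp (θ (l + 1) * I)‖ ≤
      ρ * (θ (l + 1) - θ l) := by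
  obtain ⟨φ, hφ, hzφ⟩ := exists_mem_Ico_eq_norm_mul_exp z
  obtain ⟨l, hl, hθl, hθl'⟩ := Nat.exists_mem_Ico_le_le_succ θ φ (by omega : 1 < n + 1)
    (hθ1 ▸ hφ.1) (hφ.2.le.trans hθn)
  refine ⟨l, Ico_add_one_right_eq_Icc 1 n ▸ hl, ?_⟩
  rw [hzφ, hz]
  calc _ ≤ ρ * |φ - θ l| + ρ * |φ - θ (l + 1)| :=
        add_le_add (norm_mul_exp_sub_mul_exp_le hρ _ _) (norm_mul_exp_sub_mul_exp_le hρ _ _)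
    _ = ρ * (θ (l + 1) - θ l) := by
        rw [abs_of_nonneg (sub_nonneg.mpr hθl), abs_of_nonpos (sub_nonpos.mpr hθl')]
        ring

theorem stmt_19_general {Y : Type*} [NormedAddCommGroup Y] [NormedSpace ℂ Y]
    (Shat : Y →L[ℂ] Y) (ρ₀ : ℝ) (hρ : 0 < ρ₀)
    (hS : spectralRadius ℂ Shat < ENNReal.ofReal ρ₀)
    (μ : ℕ → ℂ) (ν : ℕ → ℝ)
    (hμ1 : μ 1 = (ρ₀ : ℂ))
    (hν : ∀ l, 1 ≤ l → ν l = ‖Ring.inverse (Shat - μ l • (1 : Y →L[ℂ] Y))‖⁻¹)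
    (hμrec : ∀ l, 1 ≤ l → μ (l + 1) = μ l * Complex.exp (Complex.I * (ν l / (2 * ρ₀))))
    (nstar : ℕ) (h1n : 1 ≤ nstar)
    (hsum : 4 * Real.pi * ρ₀ ≤ ∑ l ∈ Finset.Icc 1 nstar, ν l) :
    ∀ lam : ℂ, ‖lam‖ = ρ₀ → ∃ l ∈ Finset.Icc 1 (nstar + 1),
      Finset.inf' (Finset.Icc 1 nstar) (Finset.nonempty_Icc.mpr h1n)
          (fun i => ν i / 4 + ν (i + 1) / 2)
        ≤ ‖Ring.inverse (Shat - μ l • (1 : Y →L[ℂ] Y))‖⁻¹ - ‖lam - μ l‖ ∧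
      ‖Ring.inverse (Shat - μ l • (1 : Y →L[ℂ] Y))‖⁻¹ - ‖lam - μ l‖
        ≤ ‖Ring.inverse (Shat - lam • (1 : Y →L[ℂ] Y))‖⁻¹ := by
  intro lam hlam
  set θ : ℕ → ℝ := fun l => (∑ j ∈ Ico 1 l, ν j) / (2 * ρ₀)
  have hμθ (l : ℕ) (hl : 1 ≤ l) : μ l = ρ₀ * exp (θ l * I) := by
    rw [eq_mul_exp_sum_Ico_of_succ hμrec l hl, hμ1, ← mul_sum, mul_comm I]
    push_cast [θ, sum_div]
    rfl
  have hθ_top : 2 * Real.pi ≤ θ (nstar + 1) := by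
    rw [le_div_iff₀ (by positivity), Ico_add_one_right_eq_Icc]
    linarith
  obtain ⟨l, hl, hdist⟩ := exists_mem_Icc_norm_sub_add_norm_sub_le hρ.le h1n (by simp [θ]) hθ_top hlam
  obtain ⟨hl1, hln⟩ := mem_Icc.mp hl
  have hθ_succ : ρ₀ * (θ (l + 1) - θ l) = ν l / 2 := by
    simp only [θ, sum_Ico_succ_top hl1]
    field_simp
    ring
  rw [← hμθ l hl1, ← hμθ (l + 1) (by omega), hθ_succ] at hdist
  have hunit (z : ℂ) (hz : ‖z‖ = ρ₀) : IsUnit (Shat - z • (1 : Y →L[ℂ] Y)) :=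
    isUnit_sub_smul_one_of_spectralRadius_lt (by rwa [← ENNReal.ofReal_coe_nnreal, coe_nnnorm, hz])
  have hlower (m : ℕ) (hm : 1 ≤ m) :
      ‖Ring.inverse (Shat - μ m • (1 : Y →L[ℂ] Y))‖⁻¹ - ‖lam - μ m‖
        ≤ ‖Ring.inverse (Shat - lam • (1 : Y →L[ℂ] Y))‖⁻¹ := by
    refine ContinuousLinearMap.inv_norm_inverse_sub_smul_one_sub_norm_sub_le (hunit _ ?_) (hunit _ hlam)
    rw [hμθ m hm, norm_mul, norm_exp_ofReal_mul_I, norm_real, Real.norm_of_nonneg hρ.le, mul_one]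
  have hinf := Finset.inf'_le (fun i => ν i / 4 + ν (i + 1) / 2) hl
  rcases le_sub_or_le_sub_of_add_le_half hdist with h | h
  · exact ⟨l, Icc_subset_Icc_right nstar.le_succ hl, hν l hl1 ▸ hinf.trans h, hlower l hl1⟩
  · exact ⟨l + 1, mem_Icc.mpr ⟨by omega, by omega⟩, hν (l + 1) (by omega) ▸ hinf.trans h,
      hlower (l + 1) (by omega)⟩

/-- Lemma 3.4, adaptive covering of the circle: with the adaptively chosen
points `μ_ℓ` on the circle of radius `ρ₀`, every `λ` on the circle is controlled by one of the
`μ_ℓ`, with the lower resolvent norms bounded below by `R* = min (ν_ℓ/4 + ν_{ℓ+1}/2)`. -/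
theorem stmt_19 {Y : Type*} [NormedAddCommGroup Y] [NormedSpace ℂ Y] [CompleteSpace Y]
    (Shat : Y →L[ℂ] Y) (ρ₀ : ℝ) (hρ : 0 < ρ₀)
    (hS : spectralRadius ℂ Shat < ENNReal.ofReal ρ₀)
    (μ : ℕ → ℂ) (ν : ℕ → ℝ)
    (hμ1 : μ 1 = (ρ₀ : ℂ))
    (hν : ∀ l, 1 ≤ l → ν l = ‖Ring.inverse (Shat - μ l • (1 : Y →L[ℂ] Y))‖⁻¹)
    (hμrec : ∀ l, 1 ≤ l → μ (l + 1) = μ l * Complex.exp (Complex.I * (ν l / (2 * ρ₀))))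
    (nstar : ℕ) (h1n : 1 ≤ nstar)
    (hsum : 4 * Real.pi * ρ₀ ≤ ∑ l ∈ Finset.Icc 1 nstar, ν l)
    (hmin : ∀ m : ℕ, m < nstar → ∑ l ∈ Finset.Icc 1 m, ν l < 4 * Real.pi * ρ₀) :
    ∀ lam : ℂ, ‖lam‖ = ρ₀ → ∃ l ∈ Finset.Icc 1 (nstar + 1),
      Finset.inf' (Finset.Icc 1 nstar) (Finset.nonempty_Icc.mpr h1n)
          (fun i => ν i / 4 + ν (i + 1) / 2)
        ≤ ‖Ring.inverse (Shat - μ l • (1 : Y →L[ℂ] Y))‖⁻¹ - ‖lam - μ l‖ ∧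
      ‖Ring.inverse (Shat - μ l • (1 : Y →L[ℂ] Y))‖⁻¹ - ‖lam - μ l‖
        ≤ ‖Ring.inverse (Shat - lam • (1 : Y →L[ℂ] Y))‖⁻¹ :=
  stmt_19_general Shat ρ₀ hρ hS μ ν hμ1 hν hμrec nstar h1n hsum
end
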